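/- arXiv:2007.14105 — 3 statements merged into one kernel-verified Lean document; each statement's English description precedes it below -/
import Mathlib

section
/- Let n ≥ 1 and let H₁,…,Hₙ, Y₁,…,Yₙ be an indecomposable representation of 𝔟ⁿ on ℂ³ with each H_i diagonalizable. Then there exist a permutation σ of {1,…,n} and an invertible S ∈ GL(3,ℂ) such that, setting H'_i := S⁻¹H_{σ(i)}S and Y'_i := S⁻¹Y_{σ(i)}S, one of the following holds: (i) the pair (H'₁, Y'₁) is an indecomposable representation of 𝔟 on ℂ³, and for every i ≥ 2 there is λ_i ∈ ℂ with H'_i = λ_i·I₃ and Y'_i = 0; (ii) H'₁ = diag(λ₁, λ₁−1, λ₁), Y'₁ = E₂₁, H'₂ = diag(λ₂, λ₂, λ₂−1), Y'₂ = E₃₁, and for every i ≥ 3 there is λ_i ∈ ℂ with H'_i = λ_i·I₃ and Y'_i = 0, for some scalars λ₁, λ₂; (iii) H'₁ = diag(α₁−1, α₁, α₁−1), Y'₁ = E₃₂, H'₂ = diag(α₂, α₂−1, α₂−1), Y'₂ = E₃₁, and for every i ≥ 3 there is α_i ∈ ℂ with H'_i = α_i·I₃ and Y'_i = 0, for some scalars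 α₁, α₂. Here E_{pq} denotes the 3×3 matrix unit with 1 in position (p,q) and 0 elsewhere. -/
/-!
Simultaneously diagonalise the commuting diagonalisable `H i`: their joint generalised eigenspaces
span `ℂ³`, and for diagonalisable maps these are eigenspaces. In the eigenbasis `e₀, e₁, e₂` the
relations `[H j, Y i] = -δᵢⱼ Y i` say that a nonzero entry `(Y i) p q` lowers the `H i`-weight by
one from `e_q` to `e_p` and keeps the other weights. Call `p` and `q` adjacent when some `Y i` has a
nonzero `(p, q)` or `(q, p)` entry. A basis vector adjacent to nothing spans an invariant summand,
so some `e_a` is adjacent to both others, and after permuting the basis `a = 0`. If both edges at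
`e₀` come from the same factor, all other factors act by scalars: case (i). Otherwise they come
from factors `i₁ ≠ i₂`, the weights force `Y i₁` and `Y i₂` to be multiples of matrix units, and
`[Y i₁, Y i₂] = 0` rules out a path through `e₀`; two edges leaving `e₀` give (ii) and two edges
entering it give (iii) after rescaling the basis.
-/

open Matrix

/-- A subspace of `ℂ³` invariant under (multiplication by) both matrices `T` and `S`. -/
def MatInvariantPair (T S : Matrix (Fin 3) (Fin 3) ℂ)
    (W : Submodule ℂ (Fin 3 → ℂ)) : Prop :=
  (∀ x ∈ W, T.mulVec x ∈ W) ∧ (∀ x ∈ W, S.mulVec x ∈ W)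

/-- Indecomposability of a single pair `(T, S)` acting on `ℂ³`. -/
def MatPairIndec (T S : Matrix (Fin 3) (Fin 3) ℂ) : Prop :=
  ¬ ∃ W₁ W₂ : Submodule ℂ (Fin 3 → ℂ), W₁ ≠ ⊥ ∧ W₂ ≠ ⊥ ∧ IsCompl W₁ W₂ ∧
    MatInvariantPair T S W₁ ∧ MatInvariantPair T S W₂

section SimultaneousDiagonalization

variable {m K : Type*} [Fintype m] [DecidableEq m] [Field K]

lemma conj_pow_of_isUnit {P : Matrix m m K} (hP : IsUnit P) (M : Matrix m m K) (k : ℕ) :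
    (P * M * P⁻¹) ^ k = P * M ^ k * P⁻¹ := by
  simpa [coe_units_inv] using Units.conj_pow hP.unit M k

lemma conj_diagonal_sub_smul_one {P : Matrix m m K} (hP : IsUnit P) (d : m → K) (μ : K) :
    P * diagonal d * P⁻¹ - μ • 1 = P * diagonal (fun p => d p - μ) * P⁻¹ := by
  have hdet := (isUnit_iff_isUnit_det P).mp hP
  rw [← diagonal_sub, Matrix.mul_sub, Matrix.sub_mul, ← smul_one_eq_diagonal,
      Matrix.mul_smul, Matrix.mul_one, Matrix.smul_mul, mul_nonsing_inv P hdet]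

lemma conj_mulVec_eq_zero_iff {P : Matrix m m K} (hP : IsUnit P) (M : Matrix m m K) (x : m → K) :
    (P * M * P⁻¹) *ᵥ x = 0 ↔ M *ᵥ (P⁻¹ *ᵥ x) = 0 := by
  rw [← mulVec_mulVec, ← mulVec_mulVec]
  exact (mulVec_injective_iff_isUnit.mpr hP).eq_iff' (mulVec_zero P)

lemma diagonal_mulVec_eq_zero_of_pow {e : m → K} {y : m → K} {k : ℕ}
    (h : diagonal (e ^ k) *ᵥ y = 0) : diagonal e *ᵥ y = 0 := by
  funext p
  have hp := congrFun h p
  simp only [mulVec_diagonal, Pi.pow_apply, Pi.zero_apply, mul_eq_zero] at hp ⊢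
  exact hp.imp_left (pow_eq_zero_iff'.mp · |>.1)

lemma mem_eigenspace_of_mem_maxGenEigenspace {A P : Matrix m m K} (hP : IsUnit P) {d : m → K}
    (hA : A = P * diagonal d * P⁻¹) {μ : K} {x : m → K}
    (hx : x ∈ Module.End.maxGenEigenspace (toLin' A) μ) :
    x ∈ Module.End.eigenspace (toLin' A) μ := by
  subst hA
  obtain ⟨k, hk⟩ := (Module.End.mem_maxGenEigenspace _ _ _).1 hx
  rw [Module.End.mem_eigenspace_iff, ← sub_eq_zero]
  simp only [← Matrix.toLin'_pow, Module.End.one_eq_id, ← toLin'_one, ← map_smul, ← map_sub,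
    toLin'_apply, conj_diagonal_sub_smul_one hP, conj_pow_of_isUnit hP, diagonal_pow,
    conj_mulVec_eq_zero_iff hP] at hk
  have h := diagonal_mulVec_eq_zero_of_pow hk
  rwa [← conj_mulVec_eq_zero_iff hP, ← conj_diagonal_sub_smul_one hP, sub_mulVec, smul_mulVec,
    one_mulVec, ← toLin'_apply] at h

lemma exists_isUnit_inv_mul_mul_eq_diagonal_of_basis {ι : Type*} (H : ι → Matrix m m K)
    (b : Module.Basis m K (m → K)) (c : ι → m → K) (hb : ∀ i k, H i *ᵥ b k = c i k • b k) :
    ∃ P : Matrix m m K, IsUnit P ∧ ∀ i, P⁻¹ * H i * P = diagonal (c i) := by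
  set P := (Pi.basisFun K m).toMatrix b
  have hP : IsUnit P := by
    have := (Pi.basisFun K m).invertibleToMatrix b
    exact isUnit_of_invertible P
  refine ⟨P, hP, fun i => ?_⟩
  have hcol : H i * P = P * diagonal (c i) := by
    ext p k
    rw [mul_diagonal]
    simpa [P, Module.Basis.toMatrix_apply, mulVec, dotProduct, Matrix.mul_apply, mul_comm]
      using congrFun (hb i k) p
  rw [Matrix.mul_assoc, hcol, nonsing_inv_mul_cancel_left _ _ ((isUnit_iff_isUnit_det P).mp hP)]

theorem exists_isUnit_forall_inv_mul_mul_eq_diagonal [IsAlgClosed K] {ι : Type*}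
    (H : ι → Matrix m m K) (hHH : ∀ i j, Commute (H i) (H j))
    (hdiag : ∀ i, ∃ P : Matrix m m K, IsUnit P ∧ ∃ d : m → K, H i = P * diagonal d * P⁻¹) :
    ∃ P : Matrix m m K, IsUnit P ∧ ∀ i, ∃ d : m → K, P⁻¹ * H i * P = diagonal d := by
  classical
  set f : ι → Module.End K (m → K) := fun i => toLin' (H i)
  have hcomm : ∀ i j, Commute (f i) (f j) := fun i j => (hHH i j).map toLinAlgEquiv'
  have hint := DirectSum.isInternal_submodule_of_iSupIndep_of_iSup_eq_top
    (Module.End.independent_iInf_maxGenEigenspace_of_forall_mapsTo f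
      fun i j => Module.End.mapsTo_maxGenEigenspace_of_comm (hcomm j i))
    (Module.End.iSup_iInf_maxGenEigenspace_eq_top_of_iSup_maxGenEigenspace_eq_top_of_commute f
      (fun i j _ => hcomm i j) fun i => Module.End.iSup_maxGenEigenspace_eq_top (f i))
  set b₀ := hint.collectedBasis fun χ => Module.Basis.ofVectorSpace K _
  set e := b₀.indexEquiv (Pi.basisFun K m)
  obtain ⟨P, hP, hPH⟩ := exists_isUnit_inv_mul_mul_eq_diagonal_of_basis H (b₀.reindex e)
    (fun i k => (e.symm k).1 i) fun i k => by
      obtain ⟨Q, hQ, d, hd⟩ := hdiag i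
      rw [← toLin'_apply, ← Module.End.mem_eigenspace_iff]
      refine mem_eigenspace_of_mem_maxGenEigenspace hQ hd ?_
      rw [Module.Basis.reindex_apply]
      exact (Submodule.mem_iInf _).mp (hint.collectedBasis_mem _ (e.symm k)) i
  exact ⟨P, hP, fun i => ⟨_, hPH i⟩⟩

end SimultaneousDiagonalization

section Conjugation

variable {m K : Type*} [Fintype m] [DecidableEq m] [Field K] {T S : Matrix m m K}

lemma conj_mul_conj (hST : S * T = 1) (A B : Matrix m m K) :
    T * A * S * (T * B * S) = T * (A * B) * S := by
  simp only [Matrix.mul_assoc, ← Matrix.mul_assoc S T, hST, Matrix.one_mul]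

lemma Commute.matrix_conj (hST : S * T = 1) {A B : Matrix m m K} (h : Commute A B) :
    Commute (T * A * S) (T * B * S) := by
  rw [Commute, SemiconjBy, conj_mul_conj hST, conj_mul_conj hST, h.eq]

lemma conj_smul_one (hTS : T * S = 1) (c : K) : T * (c • 1) * S = c • 1 := by
  rw [Matrix.mul_smul, Matrix.mul_one, Matrix.smul_mul, hTS]

end Conjugation

def MatFamilyIndec {ι : Type*} (H Y : ι → Matrix (Fin 3) (Fin 3) ℂ) : Prop :=
  ¬ ∃ W₁ W₂ : Submodule ℂ (Fin 3 → ℂ), W₁ ≠ ⊥ ∧ W₂ ≠ ⊥ ∧ IsCompl W₁ W₂ ∧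
    (∀ i, MatInvariantPair (H i) (Y i) W₁) ∧ (∀ i, MatInvariantPair (H i) (Y i) W₂)

lemma MatInvariantPair.map_conj {T S A B : Matrix (Fin 3) (Fin 3) ℂ} (hST : S * T = 1)
    {W : Submodule ℂ (Fin 3 → ℂ)} (h : MatInvariantPair (T * A * S) (T * B * S) W) :
    MatInvariantPair A B (W.map (toLin' S)) := by
  have key : ∀ M : Matrix (Fin 3) (Fin 3) ℂ, (∀ x ∈ W, (T * M * S) *ᵥ x ∈ W) →
      ∀ y ∈ W.map (toLin' S), M *ᵥ y ∈ W.map (toLin' S) := by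
    rintro M hM _ ⟨x, hx, rfl⟩
    refine ⟨(T * M * S) *ᵥ x, hM x hx, ?_⟩
    simp only [toLin'_apply, mulVec_mulVec, ← Matrix.mul_assoc, hST, Matrix.one_mul]
  exact ⟨key A h.1, key B h.2⟩

lemma MatFamilyIndec.conj {ι : Type*} {H Y : ι → Matrix (Fin 3) (Fin 3) ℂ}
    {T S : Matrix (Fin 3) (Fin 3) ℂ} (hTS : T * S = 1) (h : MatFamilyIndec H Y) :
    MatFamilyIndec (fun i => T * H i * S) (fun i => T * Y i * S) := by
  have hST : S * T = 1 := mul_eq_one_comm.mp hTS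
  let e := S.toLinearEquiv' (invertibleOfLeftInverse S T hTS)
  rintro ⟨W₁, W₂, h₁, h₂, hc, hW₁, hW₂⟩
  refine h ⟨W₁.map (toLin' S), W₂.map (toLin' S), ?_, ?_, ?_,
    fun i => (hW₁ i).map_conj hST, fun i => (hW₂ i).map_conj hST⟩
  · exact (Submodule.map_eq_bot_iff (e := e)).not.mpr h₁
  · exact (Submodule.map_eq_bot_iff (e := e)).not.mpr h₂
  · exact (Submodule.orderIsoMapComap e).isCompl hc

lemma MatFamilyIndec.matPairIndec {ι : Type*} {H Y : ι → Matrix (Fin 3) (Fin 3) ℂ}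
    (h : MatFamilyIndec H Y) {i₀ : ι}
    (hrest : ∀ i, i ≠ i₀ → ∃ c : ℂ, H i = c • (1 : Matrix (Fin 3) (Fin 3) ℂ) ∧ Y i = 0) :
    MatPairIndec (H i₀) (Y i₀) := by
  have hinv : ∀ W, MatInvariantPair (H i₀) (Y i₀) W → ∀ i, MatInvariantPair (H i) (Y i) W := by
    intro W hW i
    by_cases hi : i = i₀
    · exact hi ▸ hW
    · obtain ⟨c, hH, hY⟩ := hrest i hi
      refine ⟨fun x hx => ?_, fun x hx => ?_⟩
      · rw [hH, smul_mulVec, one_mulVec]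
        exact W.smul_mem c hx
      · rw [hY, zero_mulVec]
        exact W.zero_mem
  rintro ⟨W₁, W₂, h₁, h₂, hc, hW₁, hW₂⟩
  exact h ⟨W₁, W₂, h₁, h₂, hc, hinv W₁ hW₁, hinv W₂ hW₂⟩

def HasNormalForm {ι : Type*} (H Y : ι → Matrix (Fin 3) (Fin 3) ℂ) : Prop :=
    (∃ i₀ : ι, ∃ S : Matrix (Fin 3) (Fin 3) ℂ, IsUnit S ∧
      MatPairIndec (S⁻¹ * H i₀ * S) (S⁻¹ * Y i₀ * S) ∧
      ∀ i : ι, i ≠ i₀ → ∃ c : ℂ,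
        S⁻¹ * H i * S = c • (1 : Matrix (Fin 3) (Fin 3) ℂ) ∧ S⁻¹ * Y i * S = 0) ∨
    (∃ i₁ i₂ : ι, i₁ ≠ i₂ ∧ ∃ S : Matrix (Fin 3) (Fin 3) ℂ, IsUnit S ∧
      ∃ lam₁ lam₂ : ℂ,
        S⁻¹ * H i₁ * S = Matrix.diagonal ![lam₁, lam₁ - 1, lam₁] ∧
        S⁻¹ * Y i₁ * S = Matrix.single 1 0 (1 : ℂ) ∧
        S⁻¹ * H i₂ * S = Matrix.diagonal ![lam₂, lam₂, lam₂ - 1] ∧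
        S⁻¹ * Y i₂ * S = Matrix.single 2 0 (1 : ℂ) ∧
        ∀ i : ι, i ≠ i₁ → i ≠ i₂ → ∃ c : ℂ,
          S⁻¹ * H i * S = c • (1 : Matrix (Fin 3) (Fin 3) ℂ) ∧ S⁻¹ * Y i * S = 0) ∨
    (∃ i₁ i₂ : ι, i₁ ≠ i₂ ∧ ∃ S : Matrix (Fin 3) (Fin 3) ℂ, IsUnit S ∧
      ∃ a₁ a₂ : ℂ,
        S⁻¹ * H i₁ * S = Matrix.diagonal ![a₁ - 1, a₁, a₁ - 1] ∧
        S⁻¹ * Y i₁ * S = Matrix.single 2 1 (1 : ℂ) ∧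
        S⁻¹ * H i₂ * S = Matrix.diagonal ![a₂, a₂ - 1, a₂ - 1] ∧
        S⁻¹ * Y i₂ * S = Matrix.single 2 0 (1 : ℂ) ∧
        ∀ i : ι, i ≠ i₁ → i ≠ i₂ → ∃ c : ℂ,
          S⁻¹ * H i * S = c • (1 : Matrix (Fin 3) (Fin 3) ℂ) ∧ S⁻¹ * Y i * S = 0)

namespace HasNormalForm

variable {ι : Type*} {H Y : ι → Matrix (Fin 3) (Fin 3) ℂ}

lemma of_conj {T S : Matrix (Fin 3) (Fin 3) ℂ} (hTS : T * S = 1)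
    (h : HasNormalForm (fun i => T * H i * S) (fun i => T * Y i * S)) : HasNormalForm H Y := by
  have hS : IsUnit S := (isUnit_iff_isUnit_det S).mpr (isUnit_det_of_left_inverse hTS)
  have key : ∀ R M : Matrix (Fin 3) (Fin 3) ℂ, (S * R)⁻¹ * M * (S * R) = R⁻¹ * (T * M * S) * R := by
    intro R M
    rw [Matrix.mul_inv_rev, inv_eq_left_inv hTS]
    simp only [Matrix.mul_assoc]
  rcases h with ⟨i₀, R, hR, hind, hrest⟩ | ⟨i₁, i₂, h12, R, hR, l₁, l₂, hH₁, hY₁, hH₂, hY₂, hrest⟩ |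
    ⟨i₁, i₂, h12, R, hR, l₁, l₂, hH₁, hY₁, hH₂, hY₂, hrest⟩
  · exact Or.inl ⟨i₀, S * R, hS.mul hR, by simpa only [key] using hind,
      by simpa only [key] using hrest⟩
  · exact Or.inr <| Or.inl ⟨i₁, i₂, h12, S * R, hS.mul hR, l₁, l₂, by simpa only [key] using hH₁,
      by simpa only [key] using hY₁, by simpa only [key] using hH₂, by simpa only [key] using hY₂,
      by simpa only [key] using hrest⟩
  · exact Or.inr <| Or.inr ⟨i₁, i₂, h12, S * R, hS.mul hR, l₁, l₂, by simpa only [key] using hH₁,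
      by simpa only [key] using hY₁, by simpa only [key] using hH₂, by simpa only [key] using hY₂,
      by simpa only [key] using hrest⟩

lemma of_single_factor (hind : MatFamilyIndec H Y) (i₀ : ι)
    (hrest : ∀ i, i ≠ i₀ → ∃ c : ℂ, H i = c • (1 : Matrix (Fin 3) (Fin 3) ℂ) ∧ Y i = 0) :
    HasNormalForm H Y :=
  Or.inl ⟨i₀, 1, isUnit_one, by simpa using hind.matPairIndec hrest, by simpa using hrest⟩

lemma of_source {i₁ i₂ : ι} (h12 : i₁ ≠ i₂) {x y a b : ℂ} (ha : a ≠ 0) (hb : b ≠ 0)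
    (hH₁ : H i₁ = diagonal ![x, x - 1, x]) (hY₁ : Y i₁ = single 1 0 a)
    (hH₂ : H i₂ = diagonal ![y, y, y - 1]) (hY₂ : Y i₂ = single 2 0 b)
    (hrest : ∀ i, i ≠ i₁ → i ≠ i₂ → ∃ c : ℂ, H i = c • (1 : Matrix (Fin 3) (Fin 3) ℂ) ∧ Y i = 0) :
    HasNormalForm H Y := by
  have hTS : diagonal ![1, a⁻¹, b⁻¹] * diagonal ![1, a, b] = 1 := by
    ext r q; fin_cases r <;> fin_cases q <;> simp [ha, hb]
  refine of_conj hTS (Or.inr <| Or.inl ⟨i₁, i₂, h12, 1, isUnit_one, x, y, ?_, ?_, ?_, ?_, ?rest⟩)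
  all_goals simp only [inv_one, Matrix.one_mul, Matrix.mul_one]
  case rest =>
    intro i h1 h2
    obtain ⟨c, hc, hz⟩ := hrest i h1 h2
    exact ⟨c, by rw [hc, conj_smul_one hTS], by rw [hz, Matrix.mul_zero, Matrix.zero_mul]⟩
  all_goals
    first | rw [hH₁] | rw [hY₁] | rw [hH₂] | rw [hY₂]
    ext r q
    fin_cases r <;> fin_cases q <;> simp only [Matrix.mul_apply, Fin.sum_univ_three] <;>
      simp [ha, hb] <;> field_simp

lemma of_sink {i₁ i₂ : ι} (h12 : i₁ ≠ i₂) {x y a b : ℂ} (ha : a ≠ 0) (hb : b ≠ 0)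
    (hH₁ : H i₁ = diagonal ![x - 1, x, x - 1]) (hY₁ : Y i₁ = single 0 1 a)
    (hH₂ : H i₂ = diagonal ![y - 1, y - 1, y]) (hY₂ : Y i₂ = single 0 2 b)
    (hrest : ∀ i, i ≠ i₁ → i ≠ i₂ → ∃ c : ℂ, H i = c • (1 : Matrix (Fin 3) (Fin 3) ℂ) ∧ Y i = 0) :
    HasNormalForm H Y := by
  -- the new basis is `b⁻¹ e₂, a⁻¹ e₁, e₀`
  have hTS : !![0, 0, b; 0, a, 0; 1, 0, 0] * !![0, 0, 1; 0, a⁻¹, 0; b⁻¹, 0, 0] = 1 := by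
    ext r q; fin_cases r <;> fin_cases q <;> simp [Matrix.mul_apply, Fin.sum_univ_three, ha, hb]
  refine of_conj hTS (Or.inr <| Or.inr ⟨i₁, i₂, h12, 1, isUnit_one, x, y, ?_, ?_, ?_, ?_, ?rest⟩)
  all_goals simp only [inv_one, Matrix.one_mul, Matrix.mul_one]
  case rest =>
    intro i h1 h2
    obtain ⟨c, hc, hz⟩ := hrest i h1 h2
    exact ⟨c, by rw [hc, conj_smul_one hTS], by rw [hz, Matrix.mul_zero, Matrix.zero_mul]⟩
  all_goals
    first | rw [hH₁] | rw [hY₁] | rw [hH₂] | rw [hY₂]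
    ext r q
    fin_cases r <;> fin_cases q <;> simp only [Matrix.mul_apply, Fin.sum_univ_three] <;>
      simp [ha, hb] <;> field_simp

end HasNormalForm

section Weights

variable {ι m K : Type*} [Field K]

-- `d i p` is the `H i`-weight of the basis vector `e_p`, and `B i` stands for `Y i`.
def IsWeightLowering (d : ι → m → K) (B : ι → Matrix m m K) : Prop :=
  ∀ i p q, B i p q ≠ 0 → d i p = d i q - 1 ∧ ∀ j, j ≠ i → d j p = d j q

lemma diagonal_mul_sub_mul_diagonal_apply [Fintype m] [DecidableEq m] (e : m → K)
    (M : Matrix m m K) (p q : m) :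
    (diagonal e * M - M * diagonal e) p q = (e p - e q) * M p q := by
  simp only [Matrix.sub_apply, diagonal_mul, mul_diagonal]
  ring

lemma isWeightLowering_of_commutator [Fintype m] [DecidableEq m] {d : ι → m → K}
    {B : ι → Matrix m m K}
    (hrel : ∀ i, diagonal (d i) * B i - B i * diagonal (d i) = -B i)
    (hcomm : ∀ i j, i ≠ j → Commute (diagonal (d i)) (B j)) : IsWeightLowering d B := by
  intro i p q h
  constructor
  · have hpq : (diagonal (d i) * B i - B i * diagonal (d i)) p q = -1 * B i p q := by
      rw [hrel i, neg_apply, neg_one_mul]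
    rw [diagonal_mul_sub_mul_diagonal_apply] at hpq
    linear_combination mul_right_cancel₀ h hpq
  · intro j hj
    have hpq : (diagonal (d j) * B i - B i * diagonal (d j)) p q = 0 := by
      rw [(hcomm j i hj).eq, sub_self, Matrix.zero_apply]
    rw [diagonal_mul_sub_mul_diagonal_apply] at hpq
    exact sub_eq_zero.mp ((mul_eq_zero.mp hpq).resolve_right h)

namespace IsWeightLowering

variable {d : ι → m → K} {B : ι → Matrix m m K}

lemma ne_and_eq_of_adj (hw : IsWeightLowering d B) {i : ι} {p q : m}
    (h : B i p q ≠ 0 ∨ B i q p ≠ 0) : d i p ≠ d i q ∧ ∀ j, j ≠ i → d j p = d j q := by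
  rcases h with h | h
  · obtain ⟨h₁, h₂⟩ := hw i p q h
    exact ⟨fun e => one_ne_zero (by linear_combination h₁ - e), h₂⟩
  · obtain ⟨h₁, h₂⟩ := hw i q p h
    exact ⟨fun e => one_ne_zero (by linear_combination h₁ + e), fun j hj => (h₂ j hj).symm⟩

lemma eq_smul_one_and_eq_zero [DecidableEq m] (hw : IsWeightLowering d B) {j : ι} {c : K}
    (hj : ∀ p, d j p = c) : diagonal (d j) = c • 1 ∧ B j = 0 := by
  refine ⟨by rw [smul_one_eq_diagonal, funext hj], ?_⟩
  ext p q
  by_contra h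
  have := (hw j p q h).1
  rw [hj, hj] at this
  exact one_ne_zero (by linear_combination this)

lemma eq_single [DecidableEq m] [CharZero K] (hw : IsWeightLowering d B) {i j : ι} (hji : j ≠ i)
    {p q : m} (hpq : B i p q ≠ 0)
    (hsep : ∀ r s, d i r ≠ d i s → d j r = d j s → r = p ∧ s = q ∨ r = q ∧ s = p) :
    B i = single p q (B i p q) := by
  ext r s
  rw [single_apply]
  split_ifs with h
  · rw [h.1, h.2]
  by_contra hrs
  obtain ⟨h₁, h₂⟩ := hw i r s hrs
  rcases hsep r s (fun e => one_ne_zero (by linear_combination h₁ - e)) (h₂ j hji) with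
    ⟨rfl, rfl⟩ | ⟨rfl, rfl⟩
  · exact h ⟨rfl, rfl⟩
  · exact two_ne_zero (by linear_combination h₁ + (hw i _ _ hpq).1 : (2 : K) = 0)

end IsWeightLowering

end Weights

lemma not_commute_single_single {m K : Type*} [Fintype m] [DecidableEq m] [Field K]
    {p q r : m} (hpr : p ≠ r) {a b : K} (ha : a ≠ 0) (hb : b ≠ 0) :
    ¬ Commute (single p q a) (single q r b) := by
  intro h
  have := h.eq
  rw [single_mul_single_same, single_mul_single_of_ne (h := hpr.symm)] at this
  exact mul_ne_zero ha hb (by simpa using congrFun₂ this p r)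

lemma matInvariantPair_of_isolated {T S : Matrix (Fin 3) (Fin 3) ℂ} {t : Fin 3}
    (hT : ∀ q, q ≠ t → T t q = 0 ∧ T q t = 0) (hS : ∀ q, q ≠ t → S t q = 0 ∧ S q t = 0) :
    MatInvariantPair T S (ℂ ∙ Pi.single t 1) ∧
      MatInvariantPair T S (LinearMap.ker (LinearMap.proj t : (Fin 3 → ℂ) →ₗ[ℂ] ℂ)) := by
  have hspan : ∀ M : Matrix (Fin 3) (Fin 3) ℂ, (∀ q, q ≠ t → M t q = 0 ∧ M q t = 0) →
      ∀ x ∈ ℂ ∙ Pi.single t (1 : ℂ), M *ᵥ x ∈ ℂ ∙ Pi.single t (1 : ℂ) := by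
    intro M hM x hx
    obtain ⟨c, rfl⟩ := Submodule.mem_span_singleton.mp hx
    refine Submodule.mem_span_singleton.mpr ⟨c * M t t, funext fun p => ?_⟩
    by_cases hp : p = t
    · subst hp; simp [mulVec_smul]
    · simp [mulVec_smul, hp, (hM p hp).2]
  have hker : ∀ M : Matrix (Fin 3) (Fin 3) ℂ, (∀ q, q ≠ t → M t q = 0 ∧ M q t = 0) →
      ∀ x ∈ LinearMap.ker (LinearMap.proj t : (Fin 3 → ℂ) →ₗ[ℂ] ℂ),
        M *ᵥ x ∈ LinearMap.ker (LinearMap.proj t : (Fin 3 → ℂ) →ₗ[ℂ] ℂ) := by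
    intro M hM x hx
    simp only [LinearMap.mem_ker, LinearMap.proj_apply] at hx ⊢
    rw [mulVec, dotProduct]
    refine Finset.sum_eq_zero fun q _ => ?_
    by_cases hq : q = t
    · simp [hq, hx]
    · simp [(hM q hq).1]
  exact ⟨⟨hspan T hT, hspan S hS⟩, ⟨hker T hT, hker S hS⟩⟩

lemma MatFamilyIndec.exists_adj {ι : Type*} {d : ι → Fin 3 → ℂ}
    {B : ι → Matrix (Fin 3) (Fin 3) ℂ} (h : MatFamilyIndec (fun i => diagonal (d i)) B)
    (t : Fin 3) : ∃ q, q ≠ t ∧ ∃ i, B i t q ≠ 0 ∨ B i q t ≠ 0 := by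
  -- otherwise `ℂ e_t` and `{x | x t = 0}` split the family
  by_contra! hiso
  set L : (Fin 3 → ℂ) →ₗ[ℂ] ℂ := LinearMap.proj t
  have hinv := fun i => matInvariantPair_of_isolated (T := diagonal (d i)) (S := B i)
    (fun q hq => ⟨diagonal_apply_ne _ hq.symm, diagonal_apply_ne _ hq⟩) (fun q hq => hiso q hq i)
  have hL : L ≠ 0 := fun hL => by simpa [L] using LinearMap.congr_fun hL (Pi.single t 1)
  have hdisj : Disjoint (LinearMap.ker L) (ℂ ∙ (Pi.single t 1 : Fin 3 → ℂ)) := by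
    rw [Submodule.disjoint_def]
    intro x hker hspan
    obtain ⟨c, rfl⟩ := Submodule.mem_span_singleton.mp hspan
    simp_all [L]
  have hspan : (ℂ ∙ (Pi.single t 1 : Fin 3 → ℂ)) ≠ ⊥ := by simp
  have hker : LinearMap.ker L ≠ ⊥ :=
    (Submodule.ne_bot_iff _).mpr ⟨Pi.single (t + 1) 1, by simp [L], by simp⟩
  exact h ⟨_, _, hspan, hker, (Module.Dual.isCompl_ker_of_disjoint_of_ne_bot hL hdisj hspan).symm,
    fun i => (hinv i).1, fun i => (hinv i).2⟩

section CenterZero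

variable {ι : Type*} {d : ι → Fin 3 → ℂ} {B : ι → Matrix (Fin 3) (Fin 3) ℂ} {i₁ i₂ : ι}

lemma IsWeightLowering.exists_eq_smul_one_of_adj_zero (hw : IsWeightLowering d B)
    (e₁ : B i₁ 0 1 ≠ 0 ∨ B i₁ 1 0 ≠ 0) (e₂ : B i₂ 0 2 ≠ 0 ∨ B i₂ 2 0 ≠ 0) {j : ι}
    (hj₁ : j ≠ i₁) (hj₂ : j ≠ i₂) : ∃ c : ℂ, diagonal (d j) = c • 1 ∧ B j = 0 := by
  refine ⟨d j 0, hw.eq_smul_one_and_eq_zero fun p => ?_⟩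
  fin_cases p
  exacts [rfl, ((hw.ne_and_eq_of_adj e₁).2 j hj₁).symm, ((hw.ne_and_eq_of_adj e₂).2 j hj₂).symm]

lemma HasNormalForm.of_adj_zero_of_ne (hw : IsWeightLowering d B)
    (hBB : ∀ i j, Commute (B i) (B j)) (h12 : i₁ ≠ i₂)
    (e₁ : B i₁ 0 1 ≠ 0 ∨ B i₁ 1 0 ≠ 0) (e₂ : B i₂ 0 2 ≠ 0 ∨ B i₂ 2 0 ≠ 0) :
    HasNormalForm (fun i => diagonal (d i)) B := by
  have htriv := fun j => hw.exists_eq_smul_one_of_adj_zero (j := j) e₁ e₂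
  obtain ⟨hne₁, hd₁⟩ := hw.ne_and_eq_of_adj e₁
  obtain ⟨hne₂, hd₂⟩ := hw.ne_and_eq_of_adj e₂
  have hd₁₂ := hd₂ i₁ h12
  have hd₂₁ := hd₁ i₂ (Ne.symm h12)
  have hsep₁ : ∀ r s, d i₁ r ≠ d i₁ s → d i₂ r = d i₂ s → r = 0 ∧ s = 1 ∨ r = 1 ∧ s = 0 := by
    intro r s
    fin_cases r <;> fin_cases s <;> simp_all [eq_comm]
  have hsep₂ : ∀ r s, d i₂ r ≠ d i₂ s → d i₁ r = d i₁ s → r = 0 ∧ s = 2 ∨ r = 2 ∧ s = 0 := by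
    intro r s
    fin_cases r <;> fin_cases s <;> simp_all [eq_comm]
  rcases e₁ with e₁ | e₁ <;> rcases e₂ with e₂ | e₂
  · have hB₁ := hw.eq_single (Ne.symm h12) e₁ hsep₁
    have hB₂ := hw.eq_single h12 e₂ hsep₂
    refine HasNormalForm.of_sink h12 e₁ e₂ (x := d i₁ 1) (y := d i₂ 2) ?_ hB₁ ?_ hB₂ htriv
    · congr 1
      ext r
      fin_cases r <;> simp [(hw _ _ _ e₁).1, ← hd₁₂]
    · congr 1
      ext r
      fin_cases r <;> simp [(hw _ _ _ e₂).1, ← hd₂₁]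
  · have hB₁ := hw.eq_single (Ne.symm h12) e₁ hsep₁
    have hB₂ := hw.eq_single h12 e₂ fun r s h h' => (hsep₂ r s h h').symm
    exact (not_commute_single_single (by decide) e₂ e₁ (hB₂ ▸ hB₁ ▸ hBB i₂ i₁)).elim
  · have hB₁ := hw.eq_single (Ne.symm h12) e₁ fun r s h h' => (hsep₁ r s h h').symm
    have hB₂ := hw.eq_single h12 e₂ hsep₂
    exact (not_commute_single_single (by decide) e₁ e₂ (hB₁ ▸ hB₂ ▸ hBB i₁ i₂)).elim
  · have hB₁ := hw.eq_single (Ne.symm h12) e₁ fun r s h h' => (hsep₁ r s h h').symm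
    have hB₂ := hw.eq_single h12 e₂ fun r s h h' => (hsep₂ r s h h').symm
    refine HasNormalForm.of_source h12 e₁ e₂ (x := d i₁ 0) (y := d i₂ 0) ?_ hB₁ ?_ hB₂ htriv
    · congr 1
      ext r
      fin_cases r <;> simp [(hw _ _ _ e₁).1, ← hd₁₂]
    · congr 1
      ext r
      fin_cases r <;> simp [(hw _ _ _ e₂).1, ← hd₂₁]

lemma HasNormalForm.of_adj_zero (hw : IsWeightLowering d B)
    (hBB : ∀ i j, Commute (B i) (B j)) (hind : MatFamilyIndec (fun i => diagonal (d i)) B)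
    (h₁ : ∃ i, B i 0 1 ≠ 0 ∨ B i 1 0 ≠ 0) (h₂ : ∃ i, B i 0 2 ≠ 0 ∨ B i 2 0 ≠ 0) :
    HasNormalForm (fun i => diagonal (d i)) B := by
  obtain ⟨i₁, e₁⟩ := h₁
  obtain ⟨i₂, e₂⟩ := h₂
  by_cases h12 : i₁ = i₂
  · subst h12
    exact .of_single_factor hind i₁ fun j hj => hw.exists_eq_smul_one_of_adj_zero e₁ e₂ hj hj
  · exact .of_adj_zero_of_ne hw hBB h12 e₁ e₂

end CenterZero

lemma exists_center_fin_three {R : Fin 3 → Fin 3 → Prop} (hsymm : ∀ p q, R p q → R q p)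
    (h : ∀ t, ∃ q, q ≠ t ∧ R t q) : ∃ a, ∀ q, q ≠ a → R a q := by
  obtain ⟨q₀, h₀, r₀⟩ := h 0
  obtain ⟨q₁, h₁, r₁⟩ := h 1
  obtain ⟨q₂, h₂, r₂⟩ := h 2
  simp only [Fin.exists_fin_succ, Fin.forall_fin_succ]
  fin_cases q₀ <;> fin_cases q₁ <;> fin_cases q₂ <;> simp_all

lemma HasNormalForm.of_isWeightLowering {ι : Type*} {d : ι → Fin 3 → ℂ}
    {B : ι → Matrix (Fin 3) (Fin 3) ℂ} (hw : IsWeightLowering d B)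
    (hBB : ∀ i j, Commute (B i) (B j)) (hind : MatFamilyIndec (fun i => diagonal (d i)) B) :
    HasNormalForm (fun i => diagonal (d i)) B := by
  obtain ⟨a, ha⟩ := exists_center_fin_three (R := fun p q => ∃ i, B i p q ≠ 0 ∨ B i q p ≠ 0)
    (fun p q ⟨i, h⟩ => ⟨i, h.symm⟩) hind.exists_adj
  set σ := Equiv.swap 0 a
  set T : Matrix (Fin 3) (Fin 3) ℂ := σ.toPEquiv.toMatrix
  set S : Matrix (Fin 3) (Fin 3) ℂ := σ.symm.toPEquiv.toMatrix
  have hconj : ∀ M, T * M * S = M.submatrix σ σ := fun M => by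
    rw [PEquiv.toMatrix_toPEquiv_mul, PEquiv.mul_toMatrix_toPEquiv]
    rfl
  have hTS : T * S = 1 := by rw [← Matrix.mul_one T, hconj, submatrix_one_equiv]
  have hadj : ∀ k : Fin 3, k ≠ 0 → ∃ i, B i (σ 0) (σ k) ≠ 0 ∨ B i (σ k) (σ 0) ≠ 0 := fun k hk =>
    ha (σ k) (by simpa [σ, Equiv.swap_apply_left] using σ.injective.ne hk)
  refine HasNormalForm.of_conj hTS ?_
  simp only [hconj, submatrix_diagonal_equiv]
  refine HasNormalForm.of_adj_zero (d := fun i => d i ∘ σ) (B := fun i => (B i).submatrix σ σ)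
    (fun i p q h => hw i (σ p) (σ q) h) (fun i j => ?_) ?_ (hadj 1 (by decide)) (hadj 2 (by decide))
  · simpa only [hconj] using (hBB i j).matrix_conj (mul_eq_one_comm.mp hTS)
  · simpa only [hconj, submatrix_diagonal_equiv] using hind.conj hTS

theorem statement9_general {n : ℕ} (H Y : Fin n → Matrix (Fin 3) (Fin 3) ℂ)
    (hHH : ∀ i j, Commute (H i) (H j)) (hYY : ∀ i j, Commute (Y i) (Y j))
    (hHY : ∀ i j, i ≠ j → Commute (H i) (Y j))
    (hrel : ∀ i, H i * Y i - Y i * H i = -(Y i))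
    (hdiag : ∀ i, ∃ P : Matrix (Fin 3) (Fin 3) ℂ, IsUnit P ∧
      ∃ d : Fin 3 → ℂ, H i = P * Matrix.diagonal d * P⁻¹)
    (hindec : ¬ ∃ W₁ W₂ : Submodule ℂ (Fin 3 → ℂ), W₁ ≠ ⊥ ∧ W₂ ≠ ⊥ ∧ IsCompl W₁ W₂ ∧
      (∀ i, MatInvariantPair (H i) (Y i) W₁) ∧ (∀ i, MatInvariantPair (H i) (Y i) W₂)) :
    (∃ i₀ : Fin n, ∃ S : Matrix (Fin 3) (Fin 3) ℂ, IsUnit S ∧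
      MatPairIndec (S⁻¹ * H i₀ * S) (S⁻¹ * Y i₀ * S) ∧
      ∀ i : Fin n, i ≠ i₀ → ∃ c : ℂ,
        S⁻¹ * H i * S = c • (1 : Matrix (Fin 3) (Fin 3) ℂ) ∧ S⁻¹ * Y i * S = 0) ∨
    (∃ i₁ i₂ : Fin n, i₁ ≠ i₂ ∧ ∃ S : Matrix (Fin 3) (Fin 3) ℂ, IsUnit S ∧
      ∃ lam₁ lam₂ : ℂ,
        S⁻¹ * H i₁ * S = Matrix.diagonal ![lam₁, lam₁ - 1, lam₁] ∧
        S⁻¹ * Y i₁ * S = Matrix.single 1 0 (1 : ℂ) ∧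
        S⁻¹ * H i₂ * S = Matrix.diagonal ![lam₂, lam₂, lam₂ - 1] ∧
        S⁻¹ * Y i₂ * S = Matrix.single 2 0 (1 : ℂ) ∧
        ∀ i : Fin n, i ≠ i₁ → i ≠ i₂ → ∃ c : ℂ,
          S⁻¹ * H i * S = c • (1 : Matrix (Fin 3) (Fin 3) ℂ) ∧ S⁻¹ * Y i * S = 0) ∨
    (∃ i₁ i₂ : Fin n, i₁ ≠ i₂ ∧ ∃ S : Matrix (Fin 3) (Fin 3) ℂ, IsUnit S ∧
      ∃ a₁ a₂ : ℂ,
        S⁻¹ * H i₁ * S = Matrix.diagonal ![a₁ - 1, a₁, a₁ - 1] ∧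
        S⁻¹ * Y i₁ * S = Matrix.single 2 1 (1 : ℂ) ∧
        S⁻¹ * H i₂ * S = Matrix.diagonal ![a₂, a₂ - 1, a₂ - 1] ∧
        S⁻¹ * Y i₂ * S = Matrix.single 2 0 (1 : ℂ) ∧
        ∀ i : Fin n, i ≠ i₁ → i ≠ i₂ → ∃ c : ℂ,
          S⁻¹ * H i * S = c • (1 : Matrix (Fin 3) (Fin 3) ℂ) ∧ S⁻¹ * Y i * S = 0) := by
  obtain ⟨P, hP, hPd⟩ := exists_isUnit_forall_inv_mul_mul_eq_diagonal H hHH hdiag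
  choose d hd using hPd
  have hdet := (isUnit_iff_isUnit_det P).mp hP
  have hTS : P⁻¹ * P = 1 := nonsing_inv_mul P hdet
  have hST : P * P⁻¹ = 1 := mul_nonsing_inv P hdet
  refine HasNormalForm.of_conj hTS ?_
  simp only [hd]
  refine HasNormalForm.of_isWeightLowering
    (isWeightLowering_of_commutator (fun i => ?_) (fun i j hij => ?_))
    (fun i j => (hYY i j).matrix_conj hST) ?_
  · rw [← hd i, conj_mul_conj hST, conj_mul_conj hST, ← Matrix.sub_mul, ← Matrix.mul_sub, hrel i,
      Matrix.mul_neg, Matrix.neg_mul]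
  · simpa only [hd] using (hHY i j hij).matrix_conj hST
  · simpa only [hd] using MatFamilyIndec.conj hTS hindec

/-- Classification, up to reordering the factors and simultaneous
similarity, of the three-dimensional indecomposable representations of `𝔟ⁿ` with each `H_i`
diagonalizable.  `Matrix.stdBasisMatrix p q 1` is the matrix unit `E_{p+1,q+1}`. -/
theorem statement9 {n : ℕ} (hn : 1 ≤ n) (H Y : Fin n → Matrix (Fin 3) (Fin 3) ℂ)
    (hHH : ∀ i j, Commute (H i) (H j)) (hYY : ∀ i j, Commute (Y i) (Y j))
    (hHY : ∀ i j, i ≠ j → Commute (H i) (Y j))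
    (hrel : ∀ i, H i * Y i - Y i * H i = -(Y i))
    (hdiag : ∀ i, ∃ P : Matrix (Fin 3) (Fin 3) ℂ, IsUnit P ∧
      ∃ d : Fin 3 → ℂ, H i = P * Matrix.diagonal d * P⁻¹)
    (hindec : ¬ ∃ W₁ W₂ : Submodule ℂ (Fin 3 → ℂ), W₁ ≠ ⊥ ∧ W₂ ≠ ⊥ ∧ IsCompl W₁ W₂ ∧
      (∀ i, MatInvariantPair (H i) (Y i) W₁) ∧ (∀ i, MatInvariantPair (H i) (Y i) W₂)) :
    (∃ i₀ : Fin n, ∃ S : Matrix (Fin 3) (Fin 3) ℂ, IsUnit S ∧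
      MatPairIndec (S⁻¹ * H i₀ * S) (S⁻¹ * Y i₀ * S) ∧
      ∀ i : Fin n, i ≠ i₀ → ∃ c : ℂ,
        S⁻¹ * H i * S = c • (1 : Matrix (Fin 3) (Fin 3) ℂ) ∧ S⁻¹ * Y i * S = 0) ∨
    (∃ i₁ i₂ : Fin n, i₁ ≠ i₂ ∧ ∃ S : Matrix (Fin 3) (Fin 3) ℂ, IsUnit S ∧
      ∃ lam₁ lam₂ : ℂ,
        S⁻¹ * H i₁ * S = Matrix.diagonal ![lam₁, lam₁ - 1, lam₁] ∧
        S⁻¹ * Y i₁ * S = Matrix.single 1 0 (1 : ℂ) ∧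
        S⁻¹ * H i₂ * S = Matrix.diagonal ![lam₂, lam₂, lam₂ - 1] ∧
        S⁻¹ * Y i₂ * S = Matrix.single 2 0 (1 : ℂ) ∧
        ∀ i : Fin n, i ≠ i₁ → i ≠ i₂ → ∃ c : ℂ,
          S⁻¹ * H i * S = c • (1 : Matrix (Fin 3) (Fin 3) ℂ) ∧ S⁻¹ * Y i * S = 0) ∨
    (∃ i₁ i₂ : Fin n, i₁ ≠ i₂ ∧ ∃ S : Matrix (Fin 3) (Fin 3) ℂ, IsUnit S ∧
      ∃ a₁ a₂ : ℂ,
        S⁻¹ * H i₁ * S = Matrix.diagonal ![a₁ - 1, a₁, a₁ - 1] ∧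
        S⁻¹ * Y i₁ * S = Matrix.single 2 1 (1 : ℂ) ∧
        S⁻¹ * H i₂ * S = Matrix.diagonal ![a₂, a₂ - 1, a₂ - 1] ∧
        S⁻¹ * Y i₂ * S = Matrix.single 2 0 (1 : ℂ) ∧
        ∀ i : Fin n, i ≠ i₁ → i ≠ i₂ → ∃ c : ℂ,
          S⁻¹ * H i * S = c • (1 : Matrix (Fin 3) (Fin 3) ℂ) ∧ S⁻¹ * Y i * S = 0) :=
  statement9_general H Y hHH hYY hHY hrel hdiag hindec
end

section
/- Let n ≥ 2, let λ₁,…,λₙ > 0 be real, let μ₁, μ₂ > 0, and for z, w ∈ D^n set L^{(λ)}(z,w) := ∏_{j=1}^n (1 − z_j w_j)^{−λ_j} (principal branch). Let M(z,w) ∈ M₃(ℂ) be the matrix with entries M₁₁ = L^{(λ)}, M₁₂ = λ₁⁻¹∂_{w₁}L^{(λ)}, M₁₃ = λ₂⁻¹∂_{w₂}L^{(λ)}, M₂₁ = λ₁⁻¹∂_{z₁}L^{(λ)}, M₂₂ = λ₁⁻²∂_{z₁}∂_{w₁}L^{(λ)} + μ₁²·L^{(λ+2e₁)}, M₂₃ =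 λ₁⁻¹λ₂⁻¹∂_{z₁}∂_{w₂}L^{(λ)}, M₃₁ = λ₂⁻¹∂_{z₂}L^{(λ)}, M₃₂ = λ₂⁻¹λ₁⁻¹∂_{z₂}∂_{w₁}L^{(λ)}, M₃₃ = λ₂⁻²∂_{z₂}∂_{w₂}L^{(λ)} + μ₂²·L^{(λ+2e₂)}, where λ + 2e_i is λ with λ_i replaced by λ_i + 2. Then for all z, w ∈ D^n, M(z,w) = D(z,w) · A(z,w) · D(z,w) · ∏_{j=1}^n (1 − z_j w_j)^{−λ_j − 2δ_{1j} − 2δ_{2j}}, where D(z,w) = diag( (1−z₁w₁)(1−z₂w₂), 1−z₂w₂, 1−z₁w₁ ), A(z,w) is the matrix with rows (1, z₁, z₂), (w₁, 1/λ₁ + μ₁² + z₁w₁, w₁z₂), (w₂, z₁w₂, 1/λ₂ + μ₂² + z₂w₂), and δ is the Kronecker delta. -/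
open Matrix

/-- Complex partial derivative in the `i`-th coordinate of the first variable. -/
noncomputable def pdz {n : ℕ} (f : (Fin n → ℂ) → (Fin n → ℂ) → ℂ) (i : Fin n) :
    (Fin n → ℂ) → (Fin n → ℂ) → ℂ :=
  fun z w => fderiv ℂ (fun z' => f z' w) z (Pi.single i 1)

/-- Complex partial derivative in the `j`-th coordinate of the second variable. -/
noncomputable def pdw {n : ℕ} (f : (Fin n → ℂ) → (Fin n → ℂ) → ℂ) (j : Fin n) :
    (Fin n → ℂ) → (Fin n → ℂ) → ℂ :=
  fun z w => fderiv ℂ (fun w' => f z w') w (Pi.single j 1)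

/-- The sesquiholomorphic scalar kernel `L^{(λ)}(z,w) = ∏ⱼ (1 − zⱼwⱼ)^{−λⱼ}`
(principal branch). -/
noncomputable def Lker {n : ℕ} (lam : Fin n → ℝ) (z w : Fin n → ℂ) : ℂ :=
  ∏ j, (1 - z j * w j) ^ (-(lam j : ℂ))

/-! Each factor `1 - z_j w_j` lies in the slit plane, so `L^{(λ)}` is a product of holomorphic
one-variable functions with logarithmic derivatives `λ_j w_j / (1 - z_j w_j)` in `z_j` and
`λ_j z_j / (1 - z_j w_j)` in `w_j`. Since `∂_t (t / (1 - t w)) = (1 - t w)⁻²`, every entry of `M`,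
as well as `L^{(λ+2e_i)} = L^{(λ)} / (1 - z_i w_i)²`, is `L^{(λ)}` times a rational function, and the
identity becomes one between rational functions in which `1 - z₁w₁` and `1 - z₂w₂` may be treated
as independent nonzero variables. -/

open Finset ContinuousLinearMap Topology

section ProductRule

variable {𝕜 ι : Type*} [NontriviallyNormedField 𝕜] [Fintype ι] [DecidableEq ι]

theorem hasFDerivAt_prod_apply_of_logDeriv {f : ι → 𝕜 → 𝕜} {g : ι → 𝕜} {z : ι → 𝕜}
    (hf : ∀ j, HasDerivAt (f j) (g j * f j (z j)) (z j)) :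
    HasFDerivAt (fun z' => ∏ j, f j (z' j))
      ((∏ j, f j (z j)) • ∑ j, g j • proj (R := 𝕜) (φ := fun _ : ι => 𝕜) j) z := by
  refine (HasFDerivAt.finsetProd (u := univ) fun j _ => (hf j).comp_hasFDerivAt
    (f := fun z' : ι → 𝕜 => z' j) z (hasFDerivAt_apply (𝕜 := 𝕜) j z)).congr_fderiv ?_
  rw [Finset.smul_sum]
  refine Finset.sum_congr rfl fun j _ => ?_
  simp only [smul_smul, Function.comp_apply]
  rw [← mul_prod_erase univ _ (mem_univ j)]
  ac_rfl

end ProductRule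

theorem one_sub_mul_mem_slitPlane {a b : ℂ} (ha : ‖a‖ < 1) (hb : ‖b‖ < 1) :
    1 - a * b ∈ Complex.slitPlane := by
  rw [sub_eq_add_neg]
  refine Complex.mem_slitPlane_of_norm_lt_one ?_
  rw [norm_neg, norm_mul]
  exact mul_lt_one_of_nonneg_of_lt_one_left (norm_nonneg a) ha hb.le

theorem hasDerivAt_one_sub_mul_cpow {a c x : ℂ} (hx : 1 - x * c ∈ Complex.slitPlane) :
    HasDerivAt (fun t => (1 - t * c) ^ (-a)) (a * c / (1 - x * c) * (1 - x * c) ^ (-a)) x := by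
  have hlin : HasDerivAt (fun t => 1 - t * c) (-c) x := by
    simpa using ((hasDerivAt_id x).mul_const c).const_sub 1
  convert hlin.cpow_const hx using 1
  rw [Complex.cpow_sub _ _ (Complex.slitPlane_ne_zero hx), Complex.cpow_one]
  ring

theorem prod_cpow_sub_ite {ι : Type*} [Fintype ι] [DecidableEq ι] {x : ι → ℂ}
    (hx : ∀ j, x j ≠ 0) (a : ι → ℂ) (i : ι) (c : ℂ) :
    ∏ j, x j ^ (a j - if j = i then c else 0) = (∏ j, x j ^ a j) / x i ^ c := by
  simp_rw [Complex.cpow_sub _ _ (hx _)]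
  rw [prod_div_distrib]
  congr 1
  rw [Fintype.prod_eq_single i fun j hj => by simp [hj], if_pos rfl]

section Kernel

variable {n : ℕ} (lam : Fin n → ℝ) {z w : Fin n → ℂ}

theorem Lker_comm (z w : Fin n → ℂ) : Lker lam z w = Lker lam w z := by
  simp only [Lker, mul_comm]

theorem Lker_update_add_two (hzw : ∀ k, 1 - z k * w k ≠ 0) (i : Fin n) :
    Lker (Function.update lam i (lam i + 2)) z w = Lker lam z w / (1 - z i * w i) ^ 2 := by
  have hexp : ∀ j, -((Function.update lam i (lam i + 2) j : ℝ) : ℂ)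
      = -(lam j : ℂ) - if j = i then 2 else 0 := by
    intro j
    rcases eq_or_ne j i with rfl | hj
    · simp only [Function.update_self, if_true]; push_cast; ring
    · simp [hj]
  simp only [Lker, hexp, prod_cpow_sub_ite hzw, Complex.cpow_ofNat]

theorem prod_one_sub_mul_cpow_eq_Lker_div (hzw : ∀ k, 1 - z k * w k ≠ 0) (i i' : Fin n) :
    ∏ j, (1 - z j * w j) ^ (-(lam j : ℂ) - (if j = i then 2 else 0) - if j = i' then 2 else 0)
      = Lker lam z w / (1 - z i * w i) ^ 2 / (1 - z i' * w i') ^ 2 := by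
  simp only [prod_cpow_sub_ite hzw, Lker, Complex.cpow_ofNat]

theorem hasFDerivAt_Lker (h : ∀ k, 1 - z k * w k ∈ Complex.slitPlane) :
    HasFDerivAt (fun z' => Lker lam z' w)
      (Lker lam z w • ∑ j, ((lam j : ℂ) * w j / (1 - z j * w j)) •
        proj (R := ℂ) (φ := fun _ : Fin n => ℂ) j) z :=
  hasFDerivAt_prod_apply_of_logDeriv fun j => hasDerivAt_one_sub_mul_cpow (h j)

theorem pdz_Lker (h : ∀ k, 1 - z k * w k ∈ Complex.slitPlane) (i : Fin n) :
    pdz (Lker lam) i z w = lam i * w i / (1 - z i * w i) * Lker lam z w := by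
  simp [pdz, (hasFDerivAt_Lker lam h).fderiv, Pi.single_apply, mul_comm]

theorem pdw_Lker (h : ∀ k, 1 - z k * w k ∈ Complex.slitPlane) (j : Fin n) :
    pdw (Lker lam) j z w = lam j * z j / (1 - z j * w j) * Lker lam z w := by
  have hswap : pdw (Lker lam) j z w = pdz (Lker lam) j w z := by
    simp only [pdw, pdz, Lker_comm lam z]
  rw [hswap, pdz_Lker lam (fun k => mul_comm (z k) (w k) ▸ h k), mul_comm (w j), Lker_comm]

theorem pdz_pdw_Lker (h : ∀ k, 1 - z k * w k ∈ Complex.slitPlane) (i j : Fin n) :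
    pdz (pdw (Lker lam) j) i z w =
      (lam i * w i / (1 - z i * w i) * (lam j * z j / (1 - z j * w j))
        + if j = i then lam j / (1 - z j * w j) ^ 2 else 0) * Lker lam z w := by
  have hnear : ∀ᶠ z' in 𝓝 z, ∀ k, 1 - z' k * w k ∈ Complex.slitPlane :=
    Filter.eventually_all.2 fun k => (by fun_prop : Continuous fun z' : Fin n → ℂ =>
      1 - z' k * w k).continuousAt.preimage_mem_nhds (Complex.isOpen_slitPlane.mem_nhds (h k))
  have hev : (fun z' => pdw (Lker lam) j z' w) =ᶠ[𝓝 z]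
      fun z' => lam j * z' j / (1 - z' j * w j) * Lker lam z' w :=
    hnear.mono fun z' hz' => pdw_Lker lam hz' j
  have hcoef : HasDerivAt (fun t => lam j * t / (1 - t * w j)) (lam j / (1 - z j * w j) ^ 2)
      (z j) := by
    have hu := Complex.slitPlane_ne_zero (h j)
    refine (((hasDerivAt_id (z j)).const_mul (lam j : ℂ)).div
      (((hasDerivAt_id (z j)).mul_const (w j)).const_sub 1) hu).congr_deriv ?_
    simp only [id]
    ring
  have hprod : HasFDerivAt (fun z' => lam j * z' j / (1 - z' j * w j) * Lker lam z' w) _ z :=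
    (hcoef.comp_hasFDerivAt (f := fun z' : Fin n → ℂ => z' j) z
    (hasFDerivAt_apply (𝕜 := ℂ) j z)).mul (hasFDerivAt_Lker lam h)
  simp only [pdz, hev.fderiv_eq, hprod.fderiv, Function.comp_apply, _root_.add_apply,
    _root_.smul_apply, _root_.sum_apply, proj_apply, Pi.single_apply, smul_eq_mul, mul_ite,
    mul_one, mul_zero, sum_ite_eq', mem_univ, ↓reduceIte]
  split_ifs with hji
  · subst hji
    ring
  · ring

end Kernel

theorem statement10_general {m : ℕ} (lam : Fin (m + 2) → ℝ) (hpos : ∀ j, 0 < lam j)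
    (μ₁ μ₂ : ℝ)
    (z w : Fin (m + 2) → ℂ)
    (hz : ∀ k, ‖z k‖ < 1) (hw : ∀ k, ‖w k‖ < 1) :
    (!![Lker lam z w,
        ((lam 0 : ℂ))⁻¹ * pdw (Lker lam) 0 z w,
        ((lam 1 : ℂ))⁻¹ * pdw (Lker lam) 1 z w;
        ((lam 0 : ℂ))⁻¹ * pdz (Lker lam) 0 z w,
        ((lam 0 : ℂ))⁻¹ * ((lam 0 : ℂ))⁻¹ * pdz (pdw (Lker lam) 0) 0 z w
          + (μ₁ : ℂ) ^ 2 * Lker (Function.update lam 0 (lam 0 + 2)) z w,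
        ((lam 0 : ℂ))⁻¹ * ((lam 1 : ℂ))⁻¹ * pdz (pdw (Lker lam) 1) 0 z w;
        ((lam 1 : ℂ))⁻¹ * pdz (Lker lam) 1 z w,
        ((lam 1 : ℂ))⁻¹ * ((lam 0 : ℂ))⁻¹ * pdz (pdw (Lker lam) 0) 1 z w,
        ((lam 1 : ℂ))⁻¹ * ((lam 1 : ℂ))⁻¹ * pdz (pdw (Lker lam) 1) 1 z w
          + (μ₂ : ℂ) ^ 2 * Lker (Function.update lam 1 (lam 1 + 2)) z w] :
        Matrix (Fin 3) (Fin 3) ℂ) =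
      (∏ j, (1 - z j * w j) ^
          (-(lam j : ℂ) - (if j = 0 then 2 else 0) - (if j = 1 then 2 else 0))) •
        (Matrix.diagonal
            ![(1 - z 0 * w 0) * (1 - z 1 * w 1), 1 - z 1 * w 1, 1 - z 0 * w 0] *
          !![1, z 0, z 1;
             w 0, 1 / (lam 0 : ℂ) + (μ₁ : ℂ) ^ 2 + z 0 * w 0, w 0 * z 1;
             w 1, z 0 * w 1, 1 / (lam 1 : ℂ) + (μ₂ : ℂ) ^ 2 + z 1 * w 1] *
          Matrix.diagonal
            ![(1 - z 0 * w 0) * (1 - z 1 * w 1), 1 - z 1 * w 1, 1 - z 0 * w 0]) := by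
  have hslit : ∀ k, 1 - z k * w k ∈ Complex.slitPlane :=
    fun k => one_sub_mul_mem_slitPlane (hz k) (hw k)
  have hne : ∀ k, 1 - z k * w k ≠ 0 := fun k => Complex.slitPlane_ne_zero (hslit k)
  have hl0 : (lam 0 : ℂ) ≠ 0 := by exact_mod_cast (hpos 0).ne'
  have hl1 : (lam 1 : ℂ) ≠ 0 := by exact_mod_cast (hpos 1).ne'
  have h10 : (1 : Fin (m + 2)) ≠ 0 := by simp
  simp only [prod_one_sub_mul_cpow_eq_Lker_div lam hne, pdz_pdw_Lker lam hslit,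
    pdw_Lker lam hslit, pdz_Lker lam hslit, Lker_update_add_two lam hne, if_pos,
    if_neg h10, if_neg h10.symm]
  have hu0 := hne 0
  have hu1 := hne 1
  generalize Lker lam z w = L
  generalize 1 - z 0 * w 0 = u0 at hu0 ⊢
  generalize 1 - z 1 * w 1 = u1 at hu1 ⊢
  ext i j
  fin_cases i <;> fin_cases j <;>
    simp only [add_zero, Fin.zero_eta, Fin.isValue, Fin.mk_one, Fin.reduceFinMk, of_apply, cons_val',
      cons_val_zero, cons_val_one, Matrix.cons_val, cons_val_fin_one, Nat.succ_eq_add_one,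
      Nat.reduceAdd, one_div, Matrix.smul_apply, mul_diagonal, diagonal_mul, smul_eq_mul] <;>
    field_simp <;> ring

/-- Closed form of the Type I kernel: the matrix `M(z,w)` built from
`L^{(λ)}` and its partial derivatives equals
`(∏ⱼ (1 − zⱼwⱼ)^{−λⱼ−2δ_{1j}−2δ_{2j}}) • (D(z,w) A(z,w) D(z,w))`. -/
theorem statement10 {m : ℕ} (lam : Fin (m + 2) → ℝ) (hpos : ∀ j, 0 < lam j)
    (μ₁ μ₂ : ℝ) (hμ₁ : 0 < μ₁) (hμ₂ : 0 < μ₂)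
    (z w : Fin (m + 2) → ℂ)
    (hz : ∀ k, ‖z k‖ < 1) (hw : ∀ k, ‖w k‖ < 1) :
    (!![Lker lam z w,
        ((lam 0 : ℂ))⁻¹ * pdw (Lker lam) 0 z w,
        ((lam 1 : ℂ))⁻¹ * pdw (Lker lam) 1 z w;
        ((lam 0 : ℂ))⁻¹ * pdz (Lker lam) 0 z w,
        ((lam 0 : ℂ))⁻¹ * ((lam 0 : ℂ))⁻¹ * pdz (pdw (Lker lam) 0) 0 z w
          + (μ₁ : ℂ) ^ 2 * Lker (Function.update lam 0 (lam 0 + 2)) z w,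
        ((lam 0 : ℂ))⁻¹ * ((lam 1 : ℂ))⁻¹ * pdz (pdw (Lker lam) 1) 0 z w;
        ((lam 1 : ℂ))⁻¹ * pdz (Lker lam) 1 z w,
        ((lam 1 : ℂ))⁻¹ * ((lam 0 : ℂ))⁻¹ * pdz (pdw (Lker lam) 0) 1 z w,
        ((lam 1 : ℂ))⁻¹ * ((lam 1 : ℂ))⁻¹ * pdz (pdw (Lker lam) 1) 1 z w
          + (μ₂ : ℂ) ^ 2 * Lker (Function.update lam 1 (lam 1 + 2)) z w] :
        Matrix (Fin 3) (Fin 3) ℂ) =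
      (∏ j, (1 - z j * w j) ^
          (-(lam j : ℂ) - (if j = 0 then 2 else 0) - (if j = 1 then 2 else 0))) •
        (Matrix.diagonal
            ![(1 - z 0 * w 0) * (1 - z 1 * w 1), 1 - z 1 * w 1, 1 - z 0 * w 0] *
          !![1, z 0, z 1;
             w 0, 1 / (lam 0 : ℂ) + (μ₁ : ℂ) ^ 2 + z 0 * w 0, w 0 * z 1;
             w 1, z 0 * w 1, 1 / (lam 1 : ℂ) + (μ₂ : ℂ) ^ 2 + z 1 * w 1] *
          Matrix.diagonal
            ![(1 - z 0 * w 0) * (1 - z 1 * w 1), 1 - z 1 * w 1, 1 - z 0 * w 0]) :=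
  statement10_general lam hpos μ₁ μ₂ z w hz hw
end

section
/- Let n ≥ 1, let λ₁,…,λₙ > 0 be real and μ > 0. Define K : D^n × D^n → M₂(ℂ) by K(z,w) = [[ (1 − z₁w̄₁)^{−λ₁}, z₁(1 − z₁w̄₁)^{−λ₁−1} ], [ w̄₁(1 − z₁w̄₁)^{−λ₁−1}, (1/λ₁ + μ + z₁w̄₁)(1 − z₁w̄₁)^{−λ₁−2} ]] · ∏_{i=2}^n (1 − z_i w̄_i)^{−λ_i}. Then K is a positive definite kernel on D^n: for every m ≥ 1, every choice of points z⁽¹⁾,…,z⁽ᵐ⁾ ∈ D^n and every choice of vectors v₁,…,v_m ∈ ℂ², one has Σ_{p,q=1}^m ⟨ K(z⁽ᵖ⁾, z⁽ᑫ⁾) v_q, v_p ⟩ ≥ 0 (in particular this double sum is real). -/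
/-!
With `k(z, w) = (1 - z w̄)^{-λ₁}`, the first factor of `K` is the jet kernel
`[[k, ∂̄k/λ₁], [∂k/λ₁, ∂∂̄k/λ₁²]]` plus `μ (1 - z w̄)^{-λ₁-2}` in the lower right corner.
Expanding `k(z, w) = ∑ₖ c_k (z w̄)^k` with `c_k = λ₁(λ₁+1)⋯(λ₁+k-1)/k! > 0` writes the jet kernel
as `∑ₖ c_k e_k(z) e_k(w)*` with `e_k(z) = (z^k, k z^{k-1}/λ₁)`, a convergent sum of positive
semidefinite kernels; the same expansion shows that every `(1 - z w̄)^{-λ}` is positive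
semidefinite. The Schur product theorem multiplies the factors together. Positivity of a
`2 × 2`-matrix valued kernel on points indexed by `ι` is positive semidefiniteness of the block
matrix indexed by `ι × Fin 2`.
-/

open Matrix
open scoped ComplexOrder

/-- The rank `2` kernel `K^{(λ,μ)}` on the polydisc `𝔻^{m+1}`. -/
noncomputable def rank2Kernel {m : ℕ} (lam : Fin (m + 1) → ℝ) (μ : ℝ)
    (z w : Fin (m + 1) → ℂ) : Matrix (Fin 2) (Fin 2) ℂ :=
  (∏ i : Fin m, (1 - z i.succ * star (w i.succ)) ^ (-(lam i.succ : ℂ))) •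
    !![(1 - z 0 * star (w 0)) ^ (-(lam 0 : ℂ)),
        z 0 * (1 - z 0 * star (w 0)) ^ (-(lam 0 : ℂ) - 1);
       star (w 0) * (1 - z 0 * star (w 0)) ^ (-(lam 0 : ℂ) - 1),
        (1 / (lam 0 : ℂ) + (μ : ℂ) + z 0 * star (w 0)) *
          (1 - z 0 * star (w 0)) ^ (-(lam 0 : ℂ) - 2)]

open Finset

section Multichoose

open scoped Nat

theorem factorial_mul_multichoose (r : ℝ) (k : ℕ) :
    (k ! : ℝ) * Ring.multichoose r k = (ascPochhammer ℝ k).eval r := by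
  rw [← Polynomial.ascPochhammer_smeval_eq_eval,
    ← Ring.factorial_nsmul_multichoose_eq_ascPochhammer, nsmul_eq_mul]

theorem multichoose_pos {l : ℝ} (hl : 0 < l) (k : ℕ) : 0 < Ring.multichoose l k :=
  pos_of_mul_pos_right (factorial_mul_multichoose l k ▸ ascPochhammer_pos k l hl)
    (Nat.cast_nonneg _)

theorem succ_mul_multichoose_succ (r : ℝ) (k : ℕ) :
    (k + 1) * Ring.multichoose r (k + 1) = r * Ring.multichoose (r + 1) k := by
  have h1 := factorial_mul_multichoose r (k + 1)
  have h2 := factorial_mul_multichoose (r + 1) k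
  simp only [ascPochhammer_succ_left, Polynomial.eval_mul, Polynomial.eval_comp,
    Polynomial.eval_X, Polynomial.eval_add, Polynomial.eval_one, ← h2, Nat.factorial_succ,
    Nat.cast_mul, Nat.cast_add, Nat.cast_one] at h1
  apply mul_left_cancel₀ (Nat.cast_ne_zero.2 k.factorial_ne_zero : (k ! : ℝ) ≠ 0)
  linear_combination h1

theorem multichoose_succ_mul_succ_div {l : ℝ} (hl : l ≠ 0) (k : ℕ) :
    Ring.multichoose l (k + 1) * ((k + 1) / l) = Ring.multichoose (l + 1) k := by
  rw [mul_div_assoc', mul_comm, succ_mul_multichoose_succ, mul_div_cancel_left₀ _ hl]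

end Multichoose

section BinomialSeries

variable {x : ℂ}

theorem hasSum_multichoose_mul_pow (l : ℝ) (hx : ‖x‖ < 1) :
    HasSum (fun k => ((Ring.multichoose l k : ℝ) : ℂ) * x ^ k) ((1 - x) ^ (-(l : ℂ))) := by
  have h := (Complex.one_div_one_sub_cpow_hasFPowerSeriesOnBall_zero (l : ℂ)).hasSum
    (y := x) (by simpa [← ofReal_norm] using hx)
  simp only [FormalMultilinearSeries.ofScalars_apply_eq, zero_add, smul_eq_mul, one_div,
    ← Complex.cpow_neg] at h
  simpa [Ring.multichoose_eq, Complex.ofReal_choose] using h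

theorem hasSum_multichoose_succ_mul_pow {l : ℝ} (hl : l ≠ 0) (hx : ‖x‖ < 1) :
    HasSum (fun k => ((Ring.multichoose l (k + 1) * ((k + 1) / l) : ℝ) : ℂ) * x ^ k)
      ((1 - x) ^ (-(l : ℂ) - 1)) := by
  simp only [multichoose_succ_mul_succ_div hl]
  convert hasSum_multichoose_mul_pow (l + 1) hx using 2
  push_cast
  ring

theorem hasSum_multichoose_succ_mul_sq_pow {l : ℝ} (hl : l ≠ 0) (hx : ‖x‖ < 1) :
    HasSum (fun k => ((Ring.multichoose l (k + 1) * ((k + 1) / l) ^ 2 : ℝ) : ℂ) * x ^ k)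
      ((1 / l + x) * (1 - x) ^ (-(l : ℂ) - 2)) := by
  have h1 := hasSum_multichoose_succ_mul_pow hl hx
  have h2 : HasSum (fun k => ((k * Ring.multichoose (l + 1) k : ℝ) : ℂ) * x ^ k)
      ((l + 1) * x * (1 - x) ^ (-(l : ℂ) - 2)) := by
    have h := (hasSum_multichoose_mul_pow (l + 2) hx).mul_left ((l + 1) * x)
    rw [show -((l + 2 : ℝ) : ℂ) = -l - 2 by push_cast; ring] at h
    refine (hasSum_nat_add_iff' 1).1 ?_
    simp only [range_one, sum_singleton, CharP.cast_eq_zero, zero_mul, Complex.ofReal_zero,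
      sub_zero]
    refine h.congr_fun fun k => ?_
    rw [Nat.cast_succ, succ_mul_multichoose_succ, add_assoc, one_add_one_eq_two]
    push_cast
    ring
  have hx1 : 1 - x ≠ 0 := sub_ne_zero.2 fun h => by simp [← h] at hx
  have hval : (1 / l + x) * (1 - x) ^ (-(l : ℂ) - 2) =
      ((1 - x) ^ (-(l : ℂ) - 1) + (l + 1) * x * (1 - x) ^ (-(l : ℂ) - 2)) / l := by
    rw [show -(l : ℂ) - 1 = (-(l : ℂ) - 2) + 1 by ring, Complex.cpow_add _ _ hx1, Complex.cpow_one]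
    field_simp
    rw [mul_comm]
    congr 1
    ring
  rw [hval]
  refine ((h1.add h2).div_const (l : ℂ)).congr_fun fun k => ?_
  rw [sq, ← mul_assoc, multichoose_succ_mul_succ_div hl]
  push_cast
  field_simp
  ring

end BinomialSeries

section PositiveSemidefinite

variable {ι : Type*}

theorem Matrix.isClosed_setOf_posSemidef [Fintype ι] :
    IsClosed {A : Matrix ι ι ℂ | A.PosSemidef} := by
  simp only [posSemidef_iff_dotProduct_mulVec, Set.ofPred_and, Set.ofPred_forall]
  exact (isClosed_eq (by fun_prop) continuous_id).inter
    (isClosed_iInter fun x => isClosed_le continuous_const (by fun_prop))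

theorem Matrix.PosSemidef.of_hasSum [Fintype ι] {β : Type*} {f : β → Matrix ι ι ℂ}
    {A : Matrix ι ι ℂ} (hf : ∀ k, (f k).PosSemidef) (h : HasSum f A) : A.PosSemidef :=
  isClosed_setOf_posSemidef.mem_of_tendsto h
    (Filter.Eventually.of_forall fun s => posSemidef_sum s fun k _ => hf k)

theorem Matrix.posSemidef_of_prod [Finite ι] {κ 𝕜 : Type*} [RCLike 𝕜] (K : κ → Matrix ι ι 𝕜)
    (s : Finset κ) (hK : ∀ i ∈ s, (K i).PosSemidef) :
    (of fun a b => ∏ i ∈ s, K i a b).PosSemidef := by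
  classical
  induction s using Finset.induction_on with
  | empty =>
    simpa [vecMulVec] using posSemidef_vecMulVec_self_star (fun _ : ι => (1 : 𝕜))
  | insert i s hi ih =>
    have h := (hK i (mem_insert_self i s)).hadamard (ih fun j hj => hK j (mem_insert_of_mem hj))
    convert h using 1
    ext a b
    simp [prod_insert hi]

theorem Matrix.uncurry_dotProduct_comp_mulVec {n R : Type*} [Fintype ι] [Fintype n]
    [NonUnitalNonAssocSemiring R] (M : Matrix ι ι (Matrix n n R)) (u v : ι → n → R) :
    Function.uncurry u ⬝ᵥ comp ι ι n n R M *ᵥ Function.uncurry v =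
      ∑ a, ∑ b, u a ⬝ᵥ M a b *ᵥ v b := by
  simp only [dotProduct, mulVec, Fintype.sum_prod_type, comp_apply, Function.uncurry_apply_pair,
    mul_sum]
  exact sum_congr rfl fun a _ => sum_comm

end PositiveSemidefinite

theorem norm_mul_star_lt_one {z w : ℂ} (hz : ‖z‖ < 1) (hw : ‖w‖ < 1) : ‖z * star w‖ < 1 := by
  rw [norm_mul, norm_star]
  exact mul_lt_one_of_nonneg_of_lt_one_left (norm_nonneg z) hz hw.le

section Kernels

variable {ι : Type*} [Fintype ι] {l : ℝ} {ζ : ι → ℂ}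

noncomputable def weightedBergmanKernel (l : ℝ) (z w : ℂ) : ℂ := (1 - z * star w) ^ (-(l : ℂ))

theorem posSemidef_weightedBergmanKernel (hl : 0 < l) (hζ : ∀ a, ‖ζ a‖ < 1) :
    (of fun a b => weightedBergmanKernel l (ζ a) (ζ b)).PosSemidef := by
  refine .of_hasSum (fun k => (posSemidef_vecMulVec_self_star (fun a => ζ a ^ k)).smul
    (Complex.zero_le_real.2 (multichoose_pos hl k).le)) ?_
  refine Pi.hasSum.2 fun a => Pi.hasSum.2 fun b => ?_
  simp only [weightedBergmanKernel, of_apply, Matrix.smul_apply, vecMulVec_apply, Pi.star_apply,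
    star_pow, ← mul_pow]
  exact hasSum_multichoose_mul_pow l (norm_mul_star_lt_one (hζ a) (hζ b))

noncomputable def jetKernel (l : ℝ) (z w : ℂ) : Matrix (Fin 2) (Fin 2) ℂ :=
  !![(1 - z * star w) ^ (-(l : ℂ)), z * (1 - z * star w) ^ (-(l : ℂ) - 1);
     star w * (1 - z * star w) ^ (-(l : ℂ) - 1),
     (1 / (l : ℂ) + z * star w) * (1 - z * star w) ^ (-(l : ℂ) - 2)]

-- `k - 1` truncates at `k = 0`, where the factor `k` vanishes anyway.
noncomputable def jetVector (l : ℝ) (ζ : ι → ℂ) (k : ℕ) : ι × Fin 2 → ℂ :=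
  fun x => ![ζ x.1 ^ k, (k / l : ℝ) * ζ x.1 ^ (k - 1)] x.2

theorem posSemidef_comp_jetKernel (hl : 0 < l) (hζ : ∀ a, ‖ζ a‖ < 1) :
    (comp ι ι (Fin 2) (Fin 2) ℂ (of fun a b => jetKernel l (ζ a) (ζ b))).PosSemidef := by
  refine .of_hasSum (fun k => (posSemidef_vecMulVec_self_star (jetVector l ζ k)).smul
    (Complex.zero_le_real.2 (multichoose_pos hl k).le)) ?_
  refine Pi.hasSum.2 fun ⟨a, i⟩ => Pi.hasSum.2 fun ⟨b, j⟩ => ?_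
  have hx := norm_mul_star_lt_one (hζ a) (hζ b)
  fin_cases i <;> fin_cases j <;>
    simp only [jetKernel, jetVector, comp_apply, of_apply, Matrix.smul_apply, vecMulVec_apply,
      Pi.star_apply, star_pow, smul_eq_mul, Fin.zero_eta, Fin.mk_one, cons_val_zero, cons_val_one,
      cons_val', empty_val', cons_val_fin_one]
  · simpa only [← mul_pow] using hasSum_multichoose_mul_pow l hx
  all_goals
    refine (hasSum_nat_add_iff' 1).1 ?_
    simp only [range_one, sum_singleton, CharP.cast_eq_zero, zero_div, Complex.ofReal_zero,
      zero_mul, mul_zero, star_zero, sub_zero, Nat.add_sub_cancel]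
  · refine ((hasSum_multichoose_succ_mul_pow hl.ne' hx).mul_left (ζ a)).congr_fun fun k => ?_
    simp only [star_mul', star_pow, Complex.star_def, Complex.conj_ofReal]
    push_cast
    ring
  · refine ((hasSum_multichoose_succ_mul_pow hl.ne' hx).mul_left (star (ζ b))).congr_fun
      fun k => ?_
    push_cast
    ring
  · refine (hasSum_multichoose_succ_mul_sq_pow hl.ne' hx).congr_fun fun k => ?_
    simp only [star_mul', star_pow, Complex.star_def, Complex.conj_ofReal]
    push_cast
    ring

end Kernels

theorem comp_rank2Kernel {ι : Type*} {m : ℕ} (lam : Fin (m + 1) → ℝ) (μ : ℝ)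
    (p : ι → Fin (m + 1) → ℂ) :
    comp ι ι (Fin 2) (Fin 2) ℂ (of fun a b => rank2Kernel lam μ (p a) (p b)) =
      (of fun a b => ∏ i : Fin m, weightedBergmanKernel (lam i.succ) (p a i.succ) (p b i.succ)
        ).submatrix Prod.fst Prod.fst ⊙
        (comp ι ι (Fin 2) (Fin 2) ℂ (of fun a b => jetKernel (lam 0) (p a 0) (p b 0)) +
          (μ : ℂ) • ((of fun a b => weightedBergmanKernel (lam 0 + 2) (p a 0) (p b 0)
            ).submatrix Prod.fst Prod.fst ⊙
            vecMulVec (fun x : ι × Fin 2 => ![0, 1] x.2) (star fun x => ![0, 1] x.2))) := by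
  ext ⟨a, i⟩ ⟨b, j⟩
  fin_cases i <;> fin_cases j <;>
    simp [rank2Kernel, jetKernel, weightedBergmanKernel, vecMulVec_apply]
  left
  rw [show -2 + -(lam 0 : ℂ) = -(lam 0 : ℂ) - 2 by ring]
  ring

theorem posSemidef_comp_rank2Kernel {ι : Type*} [Fintype ι] {m : ℕ} {lam : Fin (m + 1) → ℝ}
    (hlam : ∀ i, 0 < lam i) {μ : ℝ} (hμ : 0 ≤ μ) {p : ι → Fin (m + 1) → ℂ}
    (hp : ∀ a i, ‖p a i‖ < 1) :
    (comp ι ι (Fin 2) (Fin 2) ℂ (of fun a b => rank2Kernel lam μ (p a) (p b))).PosSemidef := by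
  have hG := posSemidef_of_prod
    (fun i : Fin m => of fun a b => weightedBergmanKernel (lam i.succ) (p a i.succ) (p b i.succ))
    univ fun i _ => posSemidef_weightedBergmanKernel (hlam i.succ) fun a => hp a i.succ
  have hJ := posSemidef_comp_jetKernel (hlam 0) fun a => hp a 0
  have hB := posSemidef_weightedBergmanKernel (add_pos (hlam 0) two_pos)
    fun a => hp a 0
  have hE := posSemidef_vecMulVec_self_star fun x : ι × Fin 2 => ![(0 : ℂ), 1] x.2
  rw [comp_rank2Kernel]
  exact (hG.submatrix Prod.fst).hadamard
    (hJ.add ((hB.submatrix Prod.fst).hadamard hE |>.smul (Complex.zero_le_real.2 hμ)))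

/-- For `λᵢ > 0` and `μ > 0`, the kernel `K^{(λ,μ)}` is positive
definite on the polydisc: all the Gram-type double sums are nonnegative. -/
theorem statement12 {m : ℕ} (lam : Fin (m + 1) → ℝ) (hlam : ∀ i, 0 < lam i)
    (μ : ℝ) (hμ : 0 < μ) :
    ∀ N : ℕ, 1 ≤ N → ∀ p : Fin N → (Fin (m + 1) → ℂ),
      (∀ a i, ‖p a i‖ < 1) →
      ∀ v : Fin N → (Fin 2 → ℂ),
        0 ≤ ∑ a, ∑ b,
          dotProduct (star (v a)) ((rank2Kernel lam μ (p a) (p b)).mulVec (v b)) := by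
  intro N _ p hp v
  have h := (posSemidef_comp_rank2Kernel hlam hμ.le hp).dotProduct_mulVec_nonneg
    (Function.uncurry v)
  rw [show star (Function.uncurry v) = Function.uncurry (star v) from rfl,
    uncurry_dotProduct_comp_mulVec] at h
  exact h
end
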